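/- arXiv:2403.03057 — 3 statements merged into one kernel-verified Lean document; each statement's English description precedes it below -/
import Mathlib

section
/- For any set of lifelines L ⊆ ℒ, any H ⊆ L, and any interaction i ∈ 𝕀(L), the multi-trace semantics commutes with lifeline removal: σ_{L∖H}(rmv_H(i)) = rmv_H(σ_L(i)). -/
open scoped Classical

namespace RV

/-- A communication action: a lifeline, a kind (`true` = emission `!`,
`false` = reception `?`) and a message. -/
structure Action (Λ M : Type) where
  lifeline : Λ
  kind : Bool
  msg : M

/-- The interaction language: empty interaction, actions, the three loop
operators and the four binary operators. -/
inductive Interaction (Λ M : Type) : Type where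
  | empty : Interaction Λ M
  | act : Action Λ M → Interaction Λ M
  | loopS : Interaction Λ M → Interaction Λ M
  | loopW : Interaction Λ M → Interaction Λ M
  | loopP : Interaction Λ M → Interaction Λ M
  | strict : Interaction Λ M → Interaction Λ M → Interaction Λ M
  | seq : Interaction Λ M → Interaction Λ M → Interaction Λ M
  | par : Interaction Λ M → Interaction Λ M → Interaction Λ M
  | alt : Interaction Λ M → Interaction Λ M → Interaction Λ M

variable {Λ M : Type}

/-- `i ∈ 𝕀(L)` : all actions of `i` occur on lifelines belonging to `L`. -/
def Interaction.lifelinesIn (L : Set Λ) : Interaction Λ M → Prop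
  | .empty => True
  | .act a => a.lifeline ∈ L
  | .loopS i => i.lifelinesIn L
  | .loopW i => i.lifelinesIn L
  | .loopP i => i.lifelinesIn L
  | .strict i1 i2 => i1.lifelinesIn L ∧ i2.lifelinesIn L
  | .seq i1 i2 => i1.lifelinesIn L ∧ i2.lifelinesIn L
  | .par i1 i2 => i1.lifelinesIn L ∧ i2.lifelinesIn L
  | .alt i1 i2 => i1.lifelinesIn L ∧ i2.lifelinesIn L

/-- Lifeline removal `rmv_H` on interactions : actions occurring on a
lifeline of `H` are replaced by the empty interaction, the term structure
is preserved (no simplification). -/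
noncomputable def rmv (H : Set Λ) : Interaction Λ M → Interaction Λ M
  | .empty => .empty
  | .act a => if a.lifeline ∈ H then .empty else .act a
  | .loopS i => .loopS (rmv H i)
  | .loopW i => .loopW (rmv H i)
  | .loopP i => .loopP (rmv H i)
  | .strict i1 i2 => .strict (rmv H i1) (rmv H i2)
  | .seq i1 i2 => .seq (rmv H i1) (rmv H i2)
  | .par i1 i2 => .par (rmv H i1) (rmv H i2)
  | .alt i1 i2 => .alt (rmv H i1) (rmv H i2)

/-- The subterm of an interaction at a position (Dewey notation,
`false` = child 1, `true` = child 2); `none` when the position is invalid.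
The positions of `i` are exactly those `p` with `(subtermAt i p).isSome`,
and the symbol `i(p)` is the head symbol of `subtermAt i p`. -/
def subtermAt : Interaction Λ M → List Bool → Option (Interaction Λ M)
  | i, [] => some i
  | .loopS i, false :: p => subtermAt i p
  | .loopW i, false :: p => subtermAt i p
  | .loopP i, false :: p => subtermAt i p
  | .strict i1 _, false :: p => subtermAt i1 p
  | .strict _ i2, true :: p => subtermAt i2 p
  | .seq i1 _, false :: p => subtermAt i1 p
  | .seq _ i2, true :: p => subtermAt i2 p
  | .par i1 _, false :: p => subtermAt i1 p
  | .par _ i2, true :: p => subtermAt i2 p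
  | .alt i1 _, false :: p => subtermAt i1 p
  | .alt _ i2, true :: p => subtermAt i2 p
  | _, _ => none

/-- A multi-trace : one local trace per lifeline (components on lifelines
outside the relevant set `L` are required to be empty, see
`MultiTrace.over`). -/
abbrev MultiTrace (Λ M : Type) := Λ → List (Action Λ M)

namespace MultiTrace

/-- `a ∧ μ` : prepend action `a` to the component of `μ` on `θ(a)`. -/
noncomputable def prepend (a : Action Λ M) (μ : MultiTrace Λ M) : MultiTrace Λ M :=
  fun l => if l = a.lifeline then a :: μ l else μ l

/-- `μ ∧ a` : append action `a` to the component of `μ` on `θ(a)`. -/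
noncomputable def append (μ : MultiTrace Λ M) (a : Action Λ M) : MultiTrace Λ M :=
  fun l => if l = a.lifeline then μ l ++ [a] else μ l

/-- The empty multi-trace `ε_L`. -/
def eps : MultiTrace Λ M := fun _ => []

/-- `μ ∈ 𝕄(L)` : components vanish outside `L` and every action of the
component on `l` occurs on `l`. -/
def over' (L : Set Λ) (μ : MultiTrace Λ M) : Prop :=
  (∀ l ∉ L, μ l = []) ∧ ∀ l, ∀ a ∈ μ l, a.lifeline = l

/-- Lifeline removal `rmv_H` on multi-traces : restriction of the tuple of
components to `L ∖ H` (removed components become empty). -/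
noncomputable def rmv (H : Set Λ) (μ : MultiTrace Λ M) : MultiTrace Λ M :=
  fun l => if l ∈ H then [] else μ l

/-- Strict sequencing `μ1 ; μ2` of multi-traces : componentwise
concatenation. -/
def concat (μ1 μ2 : MultiTrace Λ M) : MultiTrace Λ M := fun l => μ1 l ++ μ2 l

/-- Multi-prefix relation : componentwise word prefix. -/
def isPrefixOf (μ' μ : MultiTrace Λ M) : Prop := ∀ l, μ' l <+: μ l

end MultiTrace

/-- Interleaving `μ ∈ μ1 || μ2` of multi-traces. -/
inductive MTShuffle : MultiTrace Λ M → MultiTrace Λ M → MultiTrace Λ M → Prop where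
  | nilL (μ : MultiTrace Λ M) : MTShuffle MultiTrace.eps μ μ
  | nilR (μ : MultiTrace Λ M) : MTShuffle μ MultiTrace.eps μ
  | left {μ1 μ2 μ : MultiTrace Λ M} (a : Action Λ M) :
      MTShuffle μ1 μ2 μ → MTShuffle (MultiTrace.prepend a μ1) μ2 (MultiTrace.prepend a μ)
  | right {μ1 μ2 μ : MultiTrace Λ M} (a : Action Λ M) :
      MTShuffle μ1 μ2 μ → MTShuffle μ1 (MultiTrace.prepend a μ2) (MultiTrace.prepend a μ)

/-- Interleaving (shuffle) `t ∈ t1 || t2` of global traces (words). -/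
inductive ListShuffle {α : Type} : List α → List α → List α → Prop where
  | nil : ListShuffle [] [] []
  | left {t1 t2 t : List α} (a : α) : ListShuffle t1 t2 t → ListShuffle (a :: t1) t2 (a :: t)
  | right {t1 t2 t : List α} (a : α) : ListShuffle t1 t2 t → ListShuffle t1 (a :: t2) (a :: t)

/-- Conflict predicate `t ⫫ l` : the trace `t` contains an action on `l`. -/
def conflicts (t : List (Action Λ M)) (l : Λ) : Prop := ∃ a ∈ t, a.lifeline = l

/-- Weak sequencing `t ∈ t1 ;⫫ t2` of global traces : actions of `t2` may
be anticipated only when the remaining part of `t1` has no conflict on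
their lifeline. -/
inductive WeakSeq : List (Action Λ M) → List (Action Λ M) → List (Action Λ M) → Prop where
  | nilL (t : List (Action Λ M)) : WeakSeq [] t t
  | nilR (t : List (Action Λ M)) : WeakSeq t [] t
  | left {t1 t2 t : List (Action Λ M)} (a1 : Action Λ M) :
      WeakSeq t1 t2 t → WeakSeq (a1 :: t1) t2 (a1 :: t)
  | right {t1 t2 t : List (Action Λ M)} (a2 : Action Λ M) :
      ¬ conflicts t1 a2.lifeline → WeakSeq t1 t2 t → WeakSeq t1 (a2 :: t2) (a2 :: t)

/-- Projection `π_L` of a global trace onto a multi-trace. -/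
noncomputable def proj : List (Action Λ M) → MultiTrace Λ M
  | [] => MultiTrace.eps
  | a :: t => MultiTrace.prepend a (proj t)

/-- Elementwise strict sequencing on sets of multi-traces. -/
def concatSet (S1 S2 : Set (MultiTrace Λ M)) : Set (MultiTrace Λ M) :=
  {μ | ∃ μ1 ∈ S1, ∃ μ2 ∈ S2, μ = MultiTrace.concat μ1 μ2}

/-- Elementwise interleaving on sets of multi-traces. -/
def shuffleSet (S1 S2 : Set (MultiTrace Λ M)) : Set (MultiTrace Λ M) :=
  {μ | ∃ μ1 ∈ S1, ∃ μ2 ∈ S2, MTShuffle μ1 μ2 μ}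

/-- `S^{;n}`. -/
def powConcat (S : Set (MultiTrace Λ M)) : ℕ → Set (MultiTrace Λ M)
  | 0 => {MultiTrace.eps}
  | n + 1 => concatSet S (powConcat S n)

/-- Kleene closure `S^{;*}`. -/
def kleeneConcat (S : Set (MultiTrace Λ M)) : Set (MultiTrace Λ M) := ⋃ n, powConcat S n

/-- `S^{||n}`. -/
def powShuffle (S : Set (MultiTrace Λ M)) : ℕ → Set (MultiTrace Λ M)
  | 0 => {MultiTrace.eps}
  | n + 1 => shuffleSet S (powShuffle S n)

/-- Kleene closure `S^{||*}`. -/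
def kleeneShuffle (S : Set (MultiTrace Λ M)) : Set (MultiTrace Λ M) := ⋃ n, powShuffle S n

/-- The multi-trace semantics `σ_L : 𝕀(L) → 𝒫(𝕄(L))`. -/
noncomputable def sem : Interaction Λ M → Set (MultiTrace Λ M)
  | .empty => {MultiTrace.eps}
  | .act a => {MultiTrace.prepend a MultiTrace.eps}
  | .alt i1 i2 => sem i1 ∪ sem i2
  | .strict i1 i2 => concatSet (sem i1) (sem i2)
  | .seq i1 i2 => concatSet (sem i1) (sem i2)
  | .par i1 i2 => shuffleSet (sem i1) (sem i2)
  | .loopS i => kleeneConcat (sem i)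
  | .loopW i => kleeneConcat (sem i)
  | .loopP i => kleeneShuffle (sem i)

/-- Multi-prefix closure `\overline{S}` of a set of multi-traces. -/
def prefixClosure (S : Set (MultiTrace Λ M)) : Set (MultiTrace Λ M) :=
  {μ' | ∃ μ ∈ S, MultiTrace.isPrefixOf μ' μ}

/-- Termination predicate `i ↓` : `i` accepts the empty (multi-)trace. -/
inductive Terminates : Interaction Λ M → Prop where
  | empty : Terminates .empty
  | altL {i1 i2 : Interaction Λ M} : Terminates i1 → Terminates (.alt i1 i2)
  | altR {i1 i2 : Interaction Λ M} : Terminates i2 → Terminates (.alt i1 i2)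
  | strict {i1 i2 : Interaction Λ M} : Terminates i1 → Terminates i2 → Terminates (.strict i1 i2)
  | seq {i1 i2 : Interaction Λ M} : Terminates i1 → Terminates i2 → Terminates (.seq i1 i2)
  | par {i1 i2 : Interaction Λ M} : Terminates i1 → Terminates i2 → Terminates (.par i1 i2)
  | loopS (i : Interaction Λ M) : Terminates (.loopS i)
  | loopW (i : Interaction Λ M) : Terminates (.loopW i)
  | loopP (i : Interaction Λ M) : Terminates (.loopP i)

/-- Collision predicate `i ⫫̸ l` : every trace of `i` contains an action
on lifeline `l`. -/
inductive Collides : Interaction Λ M → Λ → Prop where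
  | act {a : Action Λ M} {l : Λ} : a.lifeline = l → Collides (.act a) l
  | alt {i1 i2 : Interaction Λ M} {l : Λ} :
      Collides i1 l → Collides i2 l → Collides (.alt i1 i2) l
  | strictL {i1 i2 : Interaction Λ M} {l : Λ} : Collides i1 l → Collides (.strict i1 i2) l
  | strictR {i1 i2 : Interaction Λ M} {l : Λ} : Collides i2 l → Collides (.strict i1 i2) l
  | seqL {i1 i2 : Interaction Λ M} {l : Λ} : Collides i1 l → Collides (.seq i1 i2) l
  | seqR {i1 i2 : Interaction Λ M} {l : Λ} : Collides i2 l → Collides (.seq i1 i2) l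
  | parL {i1 i2 : Interaction Λ M} {l : Λ} : Collides i1 l → Collides (.par i1 i2) l
  | parR {i1 i2 : Interaction Λ M} {l : Λ} : Collides i2 l → Collides (.par i1 i2) l

/-- Pruning relation `i ≃^⫫_l i'`. -/
inductive Prunes : Interaction Λ M → Λ → Interaction Λ M → Prop where
  | empty (l : Λ) : Prunes .empty l .empty
  | act {a : Action Λ M} {l : Λ} : a.lifeline ≠ l → Prunes (.act a) l (.act a)
  | strict {i1 i2 i1' i2' : Interaction Λ M} {l : Λ} :
      Prunes i1 l i1' → Prunes i2 l i2' → Prunes (.strict i1 i2) l (.strict i1' i2')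
  | seq {i1 i2 i1' i2' : Interaction Λ M} {l : Λ} :
      Prunes i1 l i1' → Prunes i2 l i2' → Prunes (.seq i1 i2) l (.seq i1' i2')
  | par {i1 i2 i1' i2' : Interaction Λ M} {l : Λ} :
      Prunes i1 l i1' → Prunes i2 l i2' → Prunes (.par i1 i2) l (.par i1' i2')
  | altBoth {i1 i2 i1' i2' : Interaction Λ M} {l : Λ} :
      Prunes i1 l i1' → Prunes i2 l i2' → Prunes (.alt i1 i2) l (.alt i1' i2')
  | altL {i1 i2 i1' : Interaction Λ M} {l : Λ} :
      Prunes i1 l i1' → Collides i2 l → Prunes (.alt i1 i2) l i1'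
  | altR {i1 i2 i2' : Interaction Λ M} {l : Λ} :
      Prunes i2 l i2' → Collides i1 l → Prunes (.alt i1 i2) l i2'
  | loopS {i1 i1' : Interaction Λ M} {l : Λ} :
      Prunes i1 l i1' → Prunes (.loopS i1) l (.loopS i1')
  | loopW {i1 i1' : Interaction Λ M} {l : Λ} :
      Prunes i1 l i1' → Prunes (.loopW i1) l (.loopW i1')
  | loopP {i1 i1' : Interaction Λ M} {l : Λ} :
      Prunes i1 l i1' → Prunes (.loopP i1) l (.loopP i1')
  | loopSElim {i1 : Interaction Λ M} {l : Λ} : Collides i1 l → Prunes (.loopS i1) l .empty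
  | loopWElim {i1 : Interaction Λ M} {l : Λ} : Collides i1 l → Prunes (.loopW i1) l .empty
  | loopPElim {i1 : Interaction Λ M} {l : Λ} : Collides i1 l → Prunes (.loopP i1) l .empty

/-- Execution relation `i →[a@p] i'` of the structural operational
semantics (positions over `{1,2}` encoded by `false`/`true`). -/
inductive Executes : Interaction Λ M → Action Λ M → List Bool → Interaction Λ M → Prop where
  | act (a : Action Λ M) : Executes (.act a) a [] .empty
  | altL {i1 i1' : Interaction Λ M} {a : Action Λ M} {p : List Bool} (i2 : Interaction Λ M) :
      Executes i1 a p i1' → Executes (.alt i1 i2) a (false :: p) i1'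
  | altR {i2 i2' : Interaction Λ M} {a : Action Λ M} {p : List Bool} (i1 : Interaction Λ M) :
      Executes i2 a p i2' → Executes (.alt i1 i2) a (true :: p) i2'
  | parL {i1 i1' : Interaction Λ M} {a : Action Λ M} {p : List Bool} (i2 : Interaction Λ M) :
      Executes i1 a p i1' → Executes (.par i1 i2) a (false :: p) (.par i1' i2)
  | parR {i2 i2' : Interaction Λ M} {a : Action Λ M} {p : List Bool} (i1 : Interaction Λ M) :
      Executes i2 a p i2' → Executes (.par i1 i2) a (true :: p) (.par i1 i2')
  | strictL {i1 i1' : Interaction Λ M} {a : Action Λ M} {p : List Bool} (i2 : Interaction Λ M) :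
      Executes i1 a p i1' → Executes (.strict i1 i2) a (false :: p) (.strict i1' i2)
  | strictR {i1 i2 i2' : Interaction Λ M} {a : Action Λ M} {p : List Bool} :
      Terminates i1 → Executes i2 a p i2' → Executes (.strict i1 i2) a (true :: p) i2'
  | seqL {i1 i1' : Interaction Λ M} {a : Action Λ M} {p : List Bool} (i2 : Interaction Λ M) :
      Executes i1 a p i1' → Executes (.seq i1 i2) a (false :: p) (.seq i1' i2)
  | seqR {i1 i1' i2 i2' : Interaction Λ M} {a : Action Λ M} {p : List Bool} :
      Prunes i1 a.lifeline i1' → Executes i2 a p i2' →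
      Executes (.seq i1 i2) a (true :: p) (.seq i1' i2')
  | loopS {i1 i1' : Interaction Λ M} {a : Action Λ M} {p : List Bool} :
      Executes i1 a p i1' → Executes (.loopS i1) a (false :: p) (.strict i1' (.loopS i1))
  | loopW {i1 i1' i'' : Interaction Λ M} {a : Action Λ M} {p : List Bool} :
      Executes i1 a p i1' → Prunes (.loopW i1) a.lifeline i'' →
      Executes (.loopW i1) a (false :: p) (.seq i'' (.seq i1' (.loopW i1)))
  | loopP {i1 i1' : Interaction Λ M} {a : Action Λ M} {p : List Bool} :
      Executes i1 a p i1' → Executes (.loopP i1) a (false :: p) (.par i1' (.loopP i1))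

/-- Vertices of the analysis graph : `Ok` or a pair of an interaction and a
multi-trace over a current set of lifelines `L`. -/
inductive Vertex (Λ M : Type) : Type where
  | ok : Vertex Λ M
  | node : Set Λ → Interaction Λ M → MultiTrace Λ M → Vertex Λ M

/-- Rule `⤳_o` : emission of the `Ok` verdict on an empty multi-trace. -/
inductive StepOk : Vertex Λ M → Vertex Λ M → Prop where
  | mk (L : Set Λ) (i : Interaction Λ M) :
      StepOk (.node L i MultiTrace.eps) .ok

/-- Rule `⤳_r` : removal of a set `H` of lifelines (with `∅ ⊊ H ⊊ L`)
whose components are all empty. -/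
inductive StepRmv : Vertex Λ M → Vertex Λ M → Prop where
  | mk (L H : Set Λ) (i : Interaction Λ M) (μ : MultiTrace Λ M) :
      H.Nonempty → H ⊂ L → (∀ l ∈ H, μ l = []) →
      StepRmv (.node L i μ) (.node (L \ H) (rmv H i) (MultiTrace.rmv H μ))

/-- Rule `⤳_e` : simultaneous consumption of the action at the head of a
component of the multi-trace and execution of a matching action of the
interaction. -/
inductive StepExec : Vertex Λ M → Vertex Λ M → Prop where
  | mk (L : Set Λ) (i i' : Interaction Λ M) (a : Action Λ M) (p : List Bool)
      (μ : MultiTrace Λ M) :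
      a.lifeline ∈ L → Executes i a p i' →
      StepExec (.node L i (MultiTrace.prepend a μ)) (.node L i' μ)

/-- The transition relation `⤳` of the analysis graph. -/
def Step (v w : Vertex Λ M) : Prop := StepOk v w ∨ StepRmv v w ∨ StepExec v w

/-- One-unambiguity `a ⊑1∈ i` : in the projection of `i` onto `θ(a)`,
there is a unique position at which `a` is immediately executable. -/
def OneUnambiguous (L : Set Λ) (a : Action Λ M) (i : Interaction Λ M) : Prop :=
  ∃! p : List Bool, ∃ i'' : Interaction Λ M, Executes (rmv (L \ {a.lifeline}) i) a p i''

/-- A local trace on lifeline `l` viewed as a multi-trace over `{l}`. -/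
noncomputable def localMT (l : Λ) (w : List (Action Λ M)) : MultiTrace Λ M :=
  fun l' => if l' = l then w else []

/-- Right-nested `seq`-composition of a list of interactions (`∅` for the
empty list). -/
def seqComp : List (Interaction Λ M) → Interaction Λ M
  | [] => .empty
  | [i] => i
  | i :: rest => .seq i (seqComp rest)

/-- The operational trace semantics `σ_op(i)` generated by the two rules
`i↓ ⟹ ε ∈ σ_op(i)` and `i →[a@p] i' ∧ t ∈ σ_op(i') ⟹ a.t ∈ σ_op(i)`. -/
inductive OpTrace : Interaction Λ M → List (Action Λ M) → Prop where
  | empty {i : Interaction Λ M} : Terminates i → OpTrace i []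
  | step {i i' : Interaction Λ M} {a : Action Λ M} {p : List Bool} {t : List (Action Λ M)} :
      Executes i a p i' → OpTrace i' t → OpTrace i (a :: t)

end RV

/-! The semantics is defined compositionally and `MultiTrace.rmv H` commutes with every
operator on multi-traces, so the result follows by structural induction. The only step that
is not a direct computation is the interleaving: an interleaving of the restrictions of `μ1`
and `μ2` must be lifted to an interleaving of `μ1` and `μ2`. This works for multi-traces that
are projections of global traces (finitely many actions, each on its own lifeline), and every
multi-trace of the semantics is one. -/

namespace RV

variable {Λ M : Type}

namespace MultiTrace

@[simp]
lemma rmv_eps (H : Set Λ) : rmv H (eps : MultiTrace Λ M) = eps := by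
  funext l; simp [rmv, eps]

lemma rmv_concat (H : Set Λ) (μ1 μ2 : MultiTrace Λ M) :
    rmv H (concat μ1 μ2) = concat (rmv H μ1) (rmv H μ2) := by
  funext l; by_cases h : l ∈ H <;> simp [rmv, concat, h]

@[simp]
lemma eps_concat (μ : MultiTrace Λ M) : concat eps μ = μ := rfl

@[simp]
lemma concat_eps (μ : MultiTrace Λ M) : concat μ eps = μ := by
  funext l; simp [concat, eps]

lemma prepend_concat (a : Action Λ M) (μ1 μ2 : MultiTrace Λ M) :
    concat (prepend a μ1) μ2 = prepend a (concat μ1 μ2) := by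
  funext l; by_cases h : l = a.lifeline <;> simp [concat, prepend, h]

lemma prepend_injective (a : Action Λ M) : Function.Injective (prepend a) := by
  intro μ ν h
  funext l
  have hl := congrFun h l
  by_cases h : l = a.lifeline <;> simpa [prepend, h] using hl

lemma rmv_prepend_of_mem {H : Set Λ} {a : Action Λ M} (h : a.lifeline ∈ H)
    (μ : MultiTrace Λ M) : rmv H (prepend a μ) = rmv H μ := by
  funext l
  by_cases hl : l = a.lifeline
  · subst hl; simp [rmv, h]
  · simp [rmv, prepend, hl]

lemma rmv_prepend_of_notMem {H : Set Λ} {a : Action Λ M} (h : a.lifeline ∉ H)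
    (μ : MultiTrace Λ M) : rmv H (prepend a μ) = prepend a (rmv H μ) := by
  funext l
  by_cases hl : l = a.lifeline
  · subst hl; simp [rmv, prepend, h]
  · simp [rmv, prepend, hl]

lemma prepend_update_tail {μ : MultiTrace Λ M} {a : Action Λ M} {w : List (Action Λ M)}
    (h : μ a.lifeline = a :: w) :
    prepend a (Function.update μ a.lifeline (μ a.lifeline).tail) = μ := by
  funext l
  by_cases hl : l = a.lifeline
  · subst hl; simp [prepend, h]
  · simp [prepend, hl]

lemma update_tail_prepend (a : Action Λ M) (μ : MultiTrace Λ M) :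
    Function.update (prepend a μ) a.lifeline (prepend a μ a.lifeline).tail = μ := by
  funext l
  by_cases hl : l = a.lifeline
  · subst hl; simp [prepend]
  · simp [prepend, hl]

lemma update_tail_mem_range_proj {μ : MultiTrace Λ M} (hμ : μ ∈ Set.range proj) (l : Λ) :
    Function.update μ l (μ l).tail ∈ Set.range proj := by
  obtain ⟨t, rfl⟩ := hμ
  induction t with
  | nil => exact ⟨[], by simp [proj, eps]⟩
  | cons b t ih =>
    obtain ⟨t', ht'⟩ := ih
    by_cases hb : l = b.lifeline
    · subst hb
      exact ⟨t, (update_tail_prepend b (proj t)).symm⟩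
    · refine ⟨b :: t', funext fun l' => ?_⟩
      simp only [proj, ht', prepend, Function.update_apply]
      split_ifs <;> simp_all

lemma exists_eq_prepend_of_rmv_eq_prepend {H : Set Λ} {μ ν : MultiTrace Λ M}
    {a : Action Λ M} (hμ : μ ∈ Set.range proj) (h : rmv H μ = prepend a ν) :
    a.lifeline ∉ H ∧ ∃ μ' ∈ Set.range proj, μ = prepend a μ' ∧ rmv H μ' = ν := by
  have hc := congrFun h a.lifeline
  have ha : a.lifeline ∉ H := fun ha => by simp [rmv, prepend, ha] at hc
  have hhead : μ a.lifeline = a :: ν a.lifeline := by simpa [rmv, prepend, ha] using hc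
  have hdecomp := prepend_update_tail hhead
  refine ⟨ha, _, update_tail_mem_range_proj hμ a.lifeline, hdecomp.symm, ?_⟩
  apply prepend_injective a
  rw [← rmv_prepend_of_notMem ha, hdecomp, h]

end MultiTrace

open MultiTrace

lemma proj_cons (a : Action Λ M) (t : List (Action Λ M)) :
    proj (a :: t) = prepend a (proj t) := rfl

lemma proj_append (t1 t2 : List (Action Λ M)) :
    proj (t1 ++ t2) = concat (proj t1) (proj t2) := by
  induction t1 with
  | nil => rfl
  | cons a t ih => rw [List.cons_append, proj_cons, proj_cons, ih, prepend_concat]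

lemma prepend_mem_range_proj (a : Action Λ M) {μ : MultiTrace Λ M}
    (hμ : μ ∈ Set.range proj) : prepend a μ ∈ Set.range proj := by
  obtain ⟨t, rfl⟩ := hμ
  exact ⟨a :: t, rfl⟩

lemma mem_range_proj_of_prepend {a : Action Λ M} {μ : MultiTrace Λ M}
    (h : prepend a μ ∈ Set.range proj) : μ ∈ Set.range proj :=
  update_tail_prepend a μ ▸ update_tail_mem_range_proj h a.lifeline

lemma concat_mem_range_proj {μ1 μ2 : MultiTrace Λ M} (h1 : μ1 ∈ Set.range proj)
    (h2 : μ2 ∈ Set.range proj) : concat μ1 μ2 ∈ Set.range proj := by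
  obtain ⟨t1, rfl⟩ := h1
  obtain ⟨t2, rfl⟩ := h2
  exact ⟨t1 ++ t2, proj_append t1 t2⟩

namespace MTShuffle

lemma concat_of_mem_range_proj {μ1 : MultiTrace Λ M} (h1 : μ1 ∈ Set.range proj)
    (μ2 : MultiTrace Λ M) : MTShuffle μ1 μ2 (concat μ1 μ2) := by
  obtain ⟨t, rfl⟩ := h1
  induction t with
  | nil => exact nilL μ2
  | cons a t ih => rw [proj_cons, prepend_concat]; exact left a ih

lemma mem_range_proj {μ1 μ2 μ : MultiTrace Λ M} (h : MTShuffle μ1 μ2 μ)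
    (h1 : μ1 ∈ Set.range proj) (h2 : μ2 ∈ Set.range proj) : μ ∈ Set.range proj := by
  induction h with
  | nilL => exact h2
  | nilR => exact h1
  | left a _ ih => exact prepend_mem_range_proj a (ih (mem_range_proj_of_prepend h1) h2)
  | right a _ ih => exact prepend_mem_range_proj a (ih h1 (mem_range_proj_of_prepend h2))

lemma rmv (H : Set Λ) {μ1 μ2 μ : MultiTrace Λ M} (h : MTShuffle μ1 μ2 μ) :
    MTShuffle (MultiTrace.rmv H μ1) (MultiTrace.rmv H μ2) (MultiTrace.rmv H μ) := by
  induction h with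
  | nilL μ => rw [rmv_eps]; exact nilL _
  | nilR μ => rw [rmv_eps]; exact nilR _
  | left a _ ih =>
    by_cases ha : a.lifeline ∈ H
    · rwa [rmv_prepend_of_mem ha, rmv_prepend_of_mem ha]
    · rw [rmv_prepend_of_notMem ha, rmv_prepend_of_notMem ha]; exact left a ih
  | right a _ ih =>
    by_cases ha : a.lifeline ∈ H
    · rwa [rmv_prepend_of_mem ha, rmv_prepend_of_mem ha]
    · rw [rmv_prepend_of_notMem ha, rmv_prepend_of_notMem ha]; exact right a ih

lemma exists_of_rmv {H : Set Λ} {ν1 ν2 ν : MultiTrace Λ M} (h : MTShuffle ν1 ν2 ν) :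
    ∀ μ1 ∈ Set.range proj, ∀ μ2 ∈ Set.range proj,
      MultiTrace.rmv H μ1 = ν1 → MultiTrace.rmv H μ2 = ν2 →
      ∃ μ, MTShuffle μ1 μ2 μ ∧ MultiTrace.rmv H μ = ν := by
  induction h with
  | nilL ν =>
    -- `μ1` only acts on `H`, so it can be played entirely before `μ2`.
    rintro μ1 hμ1 μ2 - h1 h2
    exact ⟨concat μ1 μ2, concat_of_mem_range_proj hμ1 μ2, by rw [rmv_concat, h1, h2, eps_concat]⟩
  | nilR ν =>
    rintro μ1 hμ1 μ2 - h1 h2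
    exact ⟨concat μ1 μ2, concat_of_mem_range_proj hμ1 μ2, by rw [rmv_concat, h1, h2, concat_eps]⟩
  | left a _ ih =>
    rintro μ1 hμ1 μ2 hμ2 h1 h2
    obtain ⟨ha, μ1', hμ1', rfl, h1'⟩ := exists_eq_prepend_of_rmv_eq_prepend hμ1 h1
    obtain ⟨μ, hs, hr⟩ := ih μ1' hμ1' μ2 hμ2 h1' h2
    exact ⟨prepend a μ, left a hs, by rw [rmv_prepend_of_notMem ha, hr]⟩
  | right a _ ih =>
    rintro μ1 hμ1 μ2 hμ2 h1 h2
    obtain ⟨ha, μ2', hμ2', rfl, h2'⟩ := exists_eq_prepend_of_rmv_eq_prepend hμ2 h2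
    obtain ⟨μ, hs, hr⟩ := ih μ1 hμ1 μ2' hμ2' h1 h2'
    exact ⟨prepend a μ, right a hs, by rw [rmv_prepend_of_notMem ha, hr]⟩

end MTShuffle

lemma powConcat_subset_range_proj {S : Set (MultiTrace Λ M)} (hS : S ⊆ Set.range proj)
    (n : ℕ) : powConcat S n ⊆ Set.range proj := by
  induction n with
  | zero => rintro μ rfl; exact ⟨[], rfl⟩
  | succ n ih => rintro μ ⟨μ1, hμ1, μ2, hμ2, rfl⟩; exact concat_mem_range_proj (hS hμ1) (ih hμ2)

lemma powShuffle_subset_range_proj {S : Set (MultiTrace Λ M)} (hS : S ⊆ Set.range proj)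
    (n : ℕ) : powShuffle S n ⊆ Set.range proj := by
  induction n with
  | zero => rintro μ rfl; exact ⟨[], rfl⟩
  | succ n ih => rintro μ ⟨μ1, hμ1, μ2, hμ2, hs⟩; exact hs.mem_range_proj (hS hμ1) (ih hμ2)

section Image

variable (H : Set Λ)

lemma image_rmv_concatSet (S1 S2 : Set (MultiTrace Λ M)) :
    MultiTrace.rmv H '' concatSet S1 S2
      = concatSet (MultiTrace.rmv H '' S1) (MultiTrace.rmv H '' S2) := by
  ext μ
  constructor
  · rintro ⟨_, ⟨μ1, hμ1, μ2, hμ2, rfl⟩, rfl⟩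
    exact ⟨_, ⟨μ1, hμ1, rfl⟩, _, ⟨μ2, hμ2, rfl⟩, rmv_concat H μ1 μ2⟩
  · rintro ⟨_, ⟨μ1, hμ1, rfl⟩, _, ⟨μ2, hμ2, rfl⟩, rfl⟩
    exact ⟨concat μ1 μ2, ⟨μ1, hμ1, μ2, hμ2, rfl⟩, rmv_concat H μ1 μ2⟩

lemma image_rmv_shuffleSet {S1 S2 : Set (MultiTrace Λ M)} (h1 : S1 ⊆ Set.range proj)
    (h2 : S2 ⊆ Set.range proj) :
    MultiTrace.rmv H '' shuffleSet S1 S2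
      = shuffleSet (MultiTrace.rmv H '' S1) (MultiTrace.rmv H '' S2) := by
  ext μ
  constructor
  · rintro ⟨_, ⟨μ1, hμ1, μ2, hμ2, hs⟩, rfl⟩
    exact ⟨_, ⟨μ1, hμ1, rfl⟩, _, ⟨μ2, hμ2, rfl⟩, hs.rmv H⟩
  · rintro ⟨_, ⟨μ1, hμ1, rfl⟩, _, ⟨μ2, hμ2, rfl⟩, hs⟩
    obtain ⟨ν, hsν, rfl⟩ := hs.exists_of_rmv μ1 (h1 hμ1) μ2 (h2 hμ2) rfl rfl
    exact ⟨ν, ⟨μ1, hμ1, μ2, hμ2, hsν⟩, rfl⟩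

lemma image_rmv_kleeneConcat (S : Set (MultiTrace Λ M)) :
    MultiTrace.rmv H '' kleeneConcat S = kleeneConcat (MultiTrace.rmv H '' S) := by
  have hpow (n : ℕ) :
      MultiTrace.rmv H '' powConcat S n = powConcat (MultiTrace.rmv H '' S) n := by
    induction n with
    | zero => simp [powConcat]
    | succ n ih => rw [powConcat, powConcat, image_rmv_concatSet, ih]
  rw [kleeneConcat, kleeneConcat, Set.image_iUnion]
  exact iSup_congr hpow

lemma image_rmv_kleeneShuffle {S : Set (MultiTrace Λ M)} (hS : S ⊆ Set.range proj) :
    MultiTrace.rmv H '' kleeneShuffle S = kleeneShuffle (MultiTrace.rmv H '' S) := by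
  have hpow (n : ℕ) :
      MultiTrace.rmv H '' powShuffle S n = powShuffle (MultiTrace.rmv H '' S) n := by
    induction n with
    | zero => simp [powShuffle]
    | succ n ih =>
      rw [powShuffle, powShuffle,
        image_rmv_shuffleSet H hS (powShuffle_subset_range_proj hS n), ih]
  rw [kleeneShuffle, kleeneShuffle, Set.image_iUnion]
  exact iSup_congr hpow

end Image

lemma sem_subset_range_proj (i : Interaction Λ M) : sem i ⊆ Set.range proj := by
  induction i with
  | empty => rintro μ rfl; exact ⟨[], rfl⟩
  | act a => rintro μ rfl; exact ⟨[a], rfl⟩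
  | loopS i ih | loopW i ih => exact Set.iUnion_subset (powConcat_subset_range_proj ih)
  | loopP i ih => exact Set.iUnion_subset (powShuffle_subset_range_proj ih)
  | strict i1 i2 ih1 ih2 | seq i1 i2 ih1 ih2 =>
    rintro μ ⟨μ1, hμ1, μ2, hμ2, rfl⟩; exact concat_mem_range_proj (ih1 hμ1) (ih2 hμ2)
  | par i1 i2 ih1 ih2 =>
    rintro μ ⟨μ1, hμ1, μ2, hμ2, hs⟩; exact hs.mem_range_proj (ih1 hμ1) (ih2 hμ2)
  | alt i1 i2 ih1 ih2 => exact Set.union_subset ih1 ih2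

theorem statement5_general {Λ M : Type} (H : Set Λ) (i : Interaction Λ M) :
    sem (rmv H i) = MultiTrace.rmv H '' sem i := by
  induction i with
  | empty => simp [rmv, sem]
  | act a =>
    by_cases ha : a.lifeline ∈ H
    · simp [rmv, sem, ha, rmv_prepend_of_mem ha]
    · simp [rmv, sem, ha, rmv_prepend_of_notMem ha]
  | loopS i ih | loopW i ih => rw [rmv, sem, sem, ih, image_rmv_kleeneConcat]
  | loopP i ih => rw [rmv, sem, sem, ih, image_rmv_kleeneShuffle H (sem_subset_range_proj i)]
  | strict i1 i2 ih1 ih2 | seq i1 i2 ih1 ih2 => rw [rmv, sem, sem, ih1, ih2, image_rmv_concatSet]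
  | par i1 i2 ih1 ih2 =>
    rw [rmv, sem, sem, ih1, ih2,
      image_rmv_shuffleSet H (sem_subset_range_proj i1) (sem_subset_range_proj i2)]
  | alt i1 i2 ih1 ih2 => rw [rmv, sem, sem, ih1, ih2, Set.image_union]

/-- the multi-trace semantics commutes with lifeline
removal : `σ_{L∖H}(rmv_H(i)) = rmv_H(σ_L(i))`. -/
theorem statement5 {Λ M : Type} (L H : Set Λ) (hH : H ⊆ L)
    (i : Interaction Λ M) (hi : i.lifelinesIn L) :
    sem (rmv H i) = MultiTrace.rmv H '' sem i :=
  statement5_general H i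

end RV
end

section
/- The execution relation is deterministic at each position: for any interactions i and i' in 𝕀(L), any action a, and any position p, if i →[a@p] i' then a = i(p), and i' is the unique interaction i'' such that i →[a@p] i''. -/
open scoped Classical

namespace RV

variable {Λ M : Type}

namespace MultiTrace

/-- `μ ∈ 𝕄(L)` : components vanish outside `L` and every action of the
component on `l` occurs on `l`. -/
def isOver (L : Set Λ) (μ : MultiTrace Λ M) : Prop :=
  (∀ l ∉ L, μ l = []) ∧ ∀ l, ∀ a ∈ μ l, a.lifeline = l

end MultiTrace

end RV

/-! The position `p` selects a unique rule of `Executes` at every node, so the only possible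
source of nondeterminism is the pruning premise of `seq` and `loopW`, and pruning is functional. -/

namespace RV

variable {Λ M : Type}

theorem Prunes.not_collides {i i' : Interaction Λ M} {l : Λ} (hp : Prunes i l i') :
    ¬ Collides i l := by
  intro hc
  induction hp <;> cases hc <;> simp_all

theorem Prunes.unique {i i₁ i₂ : Interaction Λ M} {l : Λ}
    (h₁ : Prunes i l i₁) (h₂ : Prunes i l i₂) : i₁ = i₂ := by
  -- Two rules apply to the same `alt` or loop only if some subterm both prunes and collides.
  induction h₁ generalizing i₂ <;> cases h₂ <;>
    grind [Prunes.not_collides]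

theorem Executes.subtermAt_eq {i i' : Interaction Λ M} {a : Action Λ M} {p : List Bool}
    (h : Executes i a p i') : subtermAt i p = some (.act a) := by
  induction h with
  | act => rfl
  | _ => assumption

theorem Executes.unique {i i₁ i₂ : Interaction Λ M} {a : Action Λ M} {p : List Bool}
    (h₁ : Executes i a p i₁) (h₂ : Executes i a p i₂) : i₁ = i₂ := by
  induction h₁ generalizing i₂ <;> cases h₂ <;>
    grind [Prunes.unique]

theorem statement6_general {Λ M : Type} (i i' : Interaction Λ M)
    (a : Action Λ M) (p : List Bool) (h : Executes i a p i') :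
    subtermAt i p = some (.act a) ∧
    ∀ i'' : Interaction Λ M, Executes i a p i'' → i'' = i' :=
  ⟨h.subtermAt_eq, fun _ h'' => h''.unique h⟩

/-- the execution relation is deterministic at each
position : if `i →[a@p] i'` then `a = i(p)` (the symbol of `i` at position
`p` is the action `a`) and `i'` is the unique interaction `i''` with
`i →[a@p] i''`. -/
theorem statement6 {Λ M : Type} (L : Set Λ) (i i' : Interaction Λ M)
    (hi : i.lifelinesIn L) (hi' : i'.lifelinesIn L)
    (a : Action Λ M) (p : List Bool) (h : Executes i a p i') :
    subtermAt i p = some (.act a) ∧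
    ∀ i'' : Interaction Λ M, Executes i a p i'' → i'' = i' :=
  statement6_general i i' a p h

end RV
end

section
/- For any proper subset L of the universe ℒ of lifelines, any interaction i ∈ 𝕀(L), any set of lifelines H ⊊ L, any action a ∈ 𝔸(L) with θ(a) ∉ H, and any position p ∈ pos(i): if there exists i' ∈ 𝕀(L) with i →[a@p] i', then rmv_H(i) →[a@p] rmv_H(i'). -/
open scoped Classical

namespace RV

/-! Removal commutes with every operator and leaves actions on lifelines outside `H` untouched,
so each rule instance in a derivation of `i →[a@p] i'` is mirrored in `rmv_H`. The side conditions
survive as well: removal only introduces `∅`, which terminates, and since `θ(a) ∉ H` the actions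
witnessing a collision with `θ(a)` are never removed. -/

section

variable {Λ M : Type} (H : Set Λ)

theorem Terminates.rmv {i : Interaction Λ M} (h : Terminates i) : Terminates (rmv H i) := by
  induction h with
  | empty => exact .empty
  | altL _ ih => exact .altL ih
  | altR _ ih => exact .altR ih
  | strict _ _ ih1 ih2 => exact .strict ih1 ih2
  | seq _ _ ih1 ih2 => exact .seq ih1 ih2
  | par _ _ ih1 ih2 => exact .par ih1 ih2
  | loopS => exact .loopS _
  | loopW => exact .loopW _
  | loopP => exact .loopP _

theorem Collides.rmv {i : Interaction Λ M} {l : Λ} (hl : l ∉ H) (h : Collides i l) :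
    Collides (rmv H i) l := by
  induction h with
  | @act a _ ha =>
    rw [RV.rmv, if_neg (ha ▸ hl)]
    exact .act ha
  | alt _ _ ih1 ih2 => exact .alt (ih1 hl) (ih2 hl)
  | strictL _ ih => exact .strictL (ih hl)
  | strictR _ ih => exact .strictR (ih hl)
  | seqL _ ih => exact .seqL (ih hl)
  | seqR _ ih => exact .seqR (ih hl)
  | parL _ ih => exact .parL (ih hl)
  | parR _ ih => exact .parR (ih hl)

theorem Prunes.rmv {i i' : Interaction Λ M} {l : Λ} (hl : l ∉ H) (h : Prunes i l i') :
    Prunes (rmv H i) l (rmv H i') := by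
  induction h with
  | empty => exact .empty _
  | @act a _ ha =>
    rw [RV.rmv]
    split_ifs
    · exact .empty _
    · exact .act ha
  | strict _ _ ih1 ih2 => exact .strict (ih1 hl) (ih2 hl)
  | seq _ _ ih1 ih2 => exact .seq (ih1 hl) (ih2 hl)
  | par _ _ ih1 ih2 => exact .par (ih1 hl) (ih2 hl)
  | altBoth _ _ ih1 ih2 => exact .altBoth (ih1 hl) (ih2 hl)
  | altL _ hc ih => exact .altL (ih hl) (hc.rmv H hl)
  | altR _ hc ih => exact .altR (ih hl) (hc.rmv H hl)
  | loopS _ ih => exact .loopS (ih hl)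
  | loopW _ ih => exact .loopW (ih hl)
  | loopP _ ih => exact .loopP (ih hl)
  | loopSElim hc => exact .loopSElim (hc.rmv H hl)
  | loopWElim hc => exact .loopWElim (hc.rmv H hl)
  | loopPElim hc => exact .loopPElim (hc.rmv H hl)

theorem Executes.rmv {i i' : Interaction Λ M} {a : Action Λ M} {p : List Bool}
    (haH : a.lifeline ∉ H) (h : Executes i a p i') : Executes (rmv H i) a p (rmv H i') := by
  induction h with
  | act a =>
    simp only [RV.rmv, if_neg haH]
    exact .act a
  | altL _ _ ih => exact .altL _ (ih haH)
  | altR _ _ ih => exact .altR _ (ih haH)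
  | parL _ _ ih => exact .parL _ (ih haH)
  | parR _ _ ih => exact .parR _ (ih haH)
  | strictL _ _ ih => exact .strictL _ (ih haH)
  | strictR ht _ ih => exact .strictR (ht.rmv H) (ih haH)
  | seqL _ _ ih => exact .seqL _ (ih haH)
  | seqR hpr _ ih => exact .seqR (hpr.rmv H haH) (ih haH)
  | loopS _ ih => exact .loopS (ih haH)
  | loopW _ hpr ih => exact .loopW (ih haH) (hpr.rmv H haH)
  | loopP _ ih => exact .loopP (ih haH)

end

theorem statement8_general {Λ M : Type} (i : Interaction Λ M) (H : Set Λ)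
    (a : Action Λ M) (haH : a.lifeline ∉ H) (p : List Bool) :
    ∀ i' : Interaction Λ M, Executes i a p i' →
      Executes (rmv H i) a p (rmv H i') :=
  fun _ h => h.rmv H haH

/-- execution is preserved by lifeline removal provided the
lifeline of the executed action is not removed : for `L ⊊ ℒ`, `i ∈ 𝕀(L)`,
`H ⊊ L`, `a ∈ 𝔸(L)` with `θ(a) ∉ H` and `p ∈ pos(i)`, if `i →[a@p] i'`
then `rmv_H(i) →[a@p] rmv_H(i')`. -/
theorem statement8 {Λ M : Type} (L : Set Λ) (hL : L ⊂ Set.univ)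
    (i : Interaction Λ M) (hi : i.lifelinesIn L)
    (H : Set Λ) (hH : H ⊂ L)
    (a : Action Λ M) (haL : a.lifeline ∈ L) (haH : a.lifeline ∉ H)
    (p : List Bool) (hp : (subtermAt i p).isSome) :
    ∀ i' : Interaction Λ M, Executes i a p i' →
      Executes (rmv H i) a p (rmv H i') :=
  statement8_general i H a haH p

end RV
end
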